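/- arXiv:2412.20629 — 3 statements merged into one kernel-verified Lean document; each statement's English description precedes it below -/
import Mathlib

section
/- The φ-splice C₂ ▵_φ C₁ is a copula if and only if for every x₁, x₂ ∈ [0,1] with x₁ < x₂, at least one of the following three inequalities holds: (1) V_{x₁}^{x₂}(Γ̂) ≥ Γ̂(x₁) + Γ̂(x₂); (2) V_{x₁}^{x₂}(Γ̃) ≥ Γ̃(x₁) + Γ̃(x₂); (3) V_{x₁}^{x₂}(Γ̂) + V_{x₁}^{x₂}(Γ̃) ≥ (x₂ − x₁) + (φ(x₂) − φ(x₁)). -/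
open Set MeasureTheory

/-- `Γ̂(t) = t - Γ(t)`. -/
def Ghat (Γ : ℝ → ℝ) : ℝ → ℝ := fun t => t - Γ t

/-- `Γ̃(t) = φ(t) - Γ(t)`. -/
def Gtil (φ Γ : ℝ → ℝ) : ℝ → ℝ := fun t => φ t - Γ t

/-- The (signed) total variation `V_a^b(f)` of `f` on `[a, b] ⊆ [0, 1]`, with
the conventions `V_b^a(f) = -V_a^b(f)` and `V_a^a(f) = 0`. -/
noncomputable def sV (f : ℝ → ℝ) (a b : ℝ) : ℝ := variationOnFromTo f (Set.Icc 0 1) a b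

/-- `f₁(x, y) = x - (1/2) (V_{φ⁻¹(y)}^x(Γ̂) + Γ̂(x) + Γ̂(φ⁻¹(y)))`, where `ψ = φ⁻¹`. -/
noncomputable def f1 (ψ Γ : ℝ → ℝ) (x y : ℝ) : ℝ :=
  x - (1/2) * (sV (Ghat Γ) (ψ y) x + Ghat Γ x + Ghat Γ (ψ y))

/-- `f₂(x, y) = y - (1/2) (V_x^{φ⁻¹(y)}(Γ̃) + Γ̃(x) + Γ̃(φ⁻¹(y)))`, where `ψ = φ⁻¹`. -/
noncomputable def f2 (φ ψ Γ : ℝ → ℝ) (x y : ℝ) : ℝ :=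
  y - (1/2) * (sV (Gtil φ Γ) x (ψ y) + Gtil φ Γ x + Gtil φ Γ (ψ y))

/-- `C₁(x, y) = min {x, y, f₁(x, y)}`. -/
noncomputable def C1 (ψ Γ : ℝ → ℝ) (x y : ℝ) : ℝ := min x (min y (f1 ψ Γ x y))

/-- `C₂(x, y) = min {x, y, f₂(x, y)}`. -/
noncomputable def C2 (φ ψ Γ : ℝ → ℝ) (x y : ℝ) : ℝ := min x (min y (f2 φ ψ Γ x y))

/-- The φ-splice `C₂ ▵_φ C₁`: equal to `C₁` when `y ≤ φ(x)`, to `C₂` when `y ≥ φ(x)`. -/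
noncomputable def splice (φ ψ Γ : ℝ → ℝ) (x y : ℝ) : ℝ :=
  if y ≤ φ x then C1 ψ Γ x y else C2 φ ψ Γ x y

/-- A copula on `[0,1]²`: boundary conditions and 2-increasingness. -/
def IsCopula (C : ℝ → ℝ → ℝ) : Prop :=
  (∀ x ∈ Set.Icc (0:ℝ) 1, ∀ y ∈ Set.Icc (0:ℝ) 1, C x y ∈ Set.Icc (0:ℝ) 1) ∧
  (∀ x ∈ Set.Icc (0:ℝ) 1, C x 0 = 0 ∧ C 0 x = 0 ∧ C x 1 = x ∧ C 1 x = x) ∧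
  (∀ x₁ x₂ y₁ y₂ : ℝ, x₁ ∈ Set.Icc (0:ℝ) 1 → x₂ ∈ Set.Icc (0:ℝ) 1 →
    y₁ ∈ Set.Icc (0:ℝ) 1 → y₂ ∈ Set.Icc (0:ℝ) 1 → x₁ ≤ x₂ → y₁ ≤ y₂ →
    0 ≤ C x₂ y₂ - C x₂ y₁ - C x₁ y₂ + C x₁ y₁)

/-- The greatest quasi-copula `A_Γ` with curvilinear section `Γ` (`ψ = φ⁻¹`). -/
noncomputable def AG (φ ψ Γ : ℝ → ℝ) (x y : ℝ) : ℝ :=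
  if y ≤ φ x then min y (x - sSup (Ghat Γ '' Set.Icc (ψ y) x))
  else min x (y - sSup (Gtil φ Γ '' Set.Icc x (ψ y)))

/-!
Write `K(x, a)` for the splice at `(x, φ a)`. For `a ≤ x`, additivity of the variation splits
`f₁(x, φ a)` as `P x + Q a`, where `P` increases by at most `dx` and `Q` by at most `dφ`: the
positive and negative variations of `Γ̂ = t - Γ` are dominated by `t` and by `φ`. Hence
`min {x, φ a, P x + Q a}` is 2-increasing below the diagonal, and symmetrically above it. Every
rectangle is a sum of such rectangles and of diagonal squares `[s, t] × [φ s, φ t]`, whose volume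
is `Γ s + Γ t - K(t, s) - K(s, t)`; each of the three inequalities makes it nonnegative.

Conversely, if all three fail on `[x₁, x₂]`, then `Γ̂` and `Γ̃` are bounded below there by positive
constants. The deficit `(t - s) + (φ t - φ s) - V_s^t(Γ̂) - V_s^t(Γ̃)` is additive, so it stays
positive on arbitrarily short subintervals, and on a short enough one the diagonal square has
negative volume.
-/

local notation "𝕀" => Icc (0 : ℝ) 1

section Variation

variable {α : Type*} [LinearOrder α]

theorem eVariationOn_le_of_edist_le {E F : Type*} [PseudoEMetricSpace E] [PseudoEMetricSpace F]
    {f : α → E} {g : α → F} {s : Set α}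
    (h : ∀ x ∈ s, ∀ y ∈ s, edist (f x) (f y) ≤ edist (g x) (g y)) :
    eVariationOn f s ≤ eVariationOn g s := by
  refine iSup_le fun ⟨n, u, hu, us⟩ => ?_
  calc ∑ i ∈ Finset.range n, edist (f (u (i + 1))) (f (u i))
      ≤ ∑ i ∈ Finset.range n, edist (g (u (i + 1))) (g (u i)) :=
        Finset.sum_le_sum fun i _ => h _ (us _) _ (us _)
    _ ≤ eVariationOn g s := eVariationOn.sum_le hu us

variable {f g h : α → ℝ} {s : Set α} {a b : α}

theorem MonotoneOn.eVariationOn_sub_le (hg : MonotoneOn g s) (hh : MonotoneOn h s)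
    (ha : a ∈ s) (hb : b ∈ s) :
    eVariationOn (fun x => g x - h x) (s ∩ Icc a b) ≤ .ofReal ((g b - g a) + (h b - h a)) := by
  have hgh : MonotoneOn (fun x => g x + h x) s := hg.add hh
  calc eVariationOn (fun x => g x - h x) (s ∩ Icc a b)
      ≤ eVariationOn (fun x => g x + h x) (s ∩ Icc a b) := by
        refine eVariationOn_le_of_edist_le fun x hx y hy => ?_
        rw [edist_dist, edist_dist, Real.dist_eq, Real.dist_eq]
        refine ENNReal.ofReal_le_ofReal ?_
        rcases le_total x y with hxy | hxy
        · have := hg hx.1 hy.1 hxy; have := hh hx.1 hy.1 hxy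
          rw [abs_sub_comm, abs_sub_comm (g x + h x), abs_le, abs_of_nonneg (by linarith)]
          constructor <;> linarith
        · have := hg hy.1 hx.1 hxy; have := hh hy.1 hx.1 hxy
          rw [abs_le, abs_of_nonneg (by linarith)]
          constructor <;> linarith
    _ = .ofReal ((g b - g a) + (h b - h a)) := by
        rw [hgh.eVariationOn_eq ha hb]; ring_nf

theorem MonotoneOn.locallyBoundedVariationOn_sub (hg : MonotoneOn g s) (hh : MonotoneOn h s) :
    LocallyBoundedVariationOn (fun x => g x - h x) s := fun _ _ ha hb =>
  ne_top_of_le_ne_top ENNReal.ofReal_ne_top (hg.eVariationOn_sub_le hh ha hb)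

theorem MonotoneOn.variationOnFromTo_sub_le (hg : MonotoneOn g s) (hh : MonotoneOn h s)
    (ha : a ∈ s) (hb : b ∈ s) (hab : a ≤ b) :
    variationOnFromTo (fun x => g x - h x) s a b ≤ (g b - g a) + (h b - h a) := by
  rw [variationOnFromTo.eq_of_le _ _ hab]
  exact ENNReal.toReal_le_of_le_ofReal
    (add_nonneg (sub_nonneg.2 (hg ha hb hab)) (sub_nonneg.2 (hh ha hb hab)))
    (hg.eVariationOn_sub_le hh ha hb)

theorem abs_sub_le_variationOnFromTo (hf : LocallyBoundedVariationOn f s)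
    (ha : a ∈ s) (hb : b ∈ s) (hab : a ≤ b) : |f b - f a| ≤ variationOnFromTo f s a b := by
  simpa [variationOnFromTo.self] using variationOnFromTo.abs_sub_le_sub_of_le hf ha ha hb hab

theorem add_sub_variationOnFromTo_le (hf : LocallyBoundedVariationOn f s) {u : α}
    (ha : a ∈ s) (hu : u ∈ s) (hb : b ∈ s) (hau : a ≤ u) (hub : u ≤ b) :
    f a + f b - variationOnFromTo f s a b ≤ 2 * f u := by
  have hau' := abs_sub_le_variationOnFromTo hf ha hu hau
  have hub' := abs_sub_le_variationOnFromTo hf hu hb hub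
  rw [← variationOnFromTo.add hf ha hu hb]
  linarith [neg_abs_le (f u - f a), le_abs_self (f b - f u)]

end Variation

theorem exists_short_subinterval_lt {g : ℝ → ℝ} {a b δ : ℝ} (hab : a ≤ b) (hg : g a < g b)
    (hδ : 0 < δ) : ∃ s t, a ≤ s ∧ s < t ∧ t ≤ b ∧ t - s < δ ∧ g s < g t := by
  obtain ⟨n, hn⟩ := exists_nat_gt ((b - a) / δ)
  have hn₀ : (0 : ℝ) < n := (div_nonneg (sub_nonneg.2 hab) hδ.le).trans_lt hn
  set u : ℕ → ℝ := fun i => a + i * ((b - a) / n)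
  have hsum : ∑ i ∈ Finset.range n, (g (u (i + 1)) - g (u i)) = g b - g a := by
    rw [Finset.sum_range_sub (fun i => g (u i))]
    simp only [u, Nat.cast_zero, zero_mul, add_zero]
    rw [mul_div_cancel₀ _ hn₀.ne', add_sub_cancel]
  obtain ⟨i, hi, hgi⟩ : ∃ i ∈ Finset.range n, 0 < g (u (i + 1)) - g (u i) :=
    Finset.exists_lt_of_sum_lt (by simpa [hsum] using hg)
  have hi' : (i : ℝ) + 1 ≤ n := by exact_mod_cast Finset.mem_range.1 hi
  have hstep : 0 < (b - a) / n :=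
    div_pos (sub_pos.2 (hab.lt_of_ne (by rintro rfl; exact hg.false))) hn₀
  refine ⟨u i, u (i + 1), ?_, ?_, ?_, ?_, by linarith⟩
  · simp only [u]; linarith [mul_nonneg (Nat.cast_nonneg i) hstep.le]
  · simp only [u]; push_cast; linarith
  · simp only [u]; push_cast
    calc a + (i + 1) * ((b - a) / n) ≤ a + n * ((b - a) / n) := by gcongr
      _ = b := by rw [mul_div_cancel₀ _ hn₀.ne']; ring
  · have : (b - a) / n < δ := by
      rw [div_lt_iff₀ hn₀]; rw [div_lt_iff₀ hδ] at hn; linarith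
    simp only [u]; push_cast; linarith

section TwoIncreasing

variable {α : Type*}

def rectVol {β : Type*} (C : α → β → ℝ) (x₁ x₂ : α) (y₁ y₂ : β) : ℝ :=
  C x₂ y₂ - C x₂ y₁ - C x₁ y₂ + C x₁ y₁

variable [LinearOrder α]

def TwoIncreasingOn (C : α → α → ℝ) (s : Set α) : Prop :=
  ∀ x₁ x₂ y₁ y₂, x₁ ∈ s → x₂ ∈ s → y₁ ∈ s → y₂ ∈ s → x₁ ≤ x₂ → y₁ ≤ y₂ →
    0 ≤ rectVol C x₁ x₂ y₁ y₂

theorem TwoIncreasingOn.of_diagonal {C : α → α → ℝ} {s : Set α}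
    (below : ∀ x₁ ∈ s, ∀ x₂ ∈ s, ∀ y₁ ∈ s, ∀ y₂ ∈ s, y₁ ≤ y₂ → y₂ ≤ x₁ → x₁ ≤ x₂ →
      0 ≤ rectVol C x₁ x₂ y₁ y₂)
    (above : ∀ x₁ ∈ s, ∀ x₂ ∈ s, ∀ y₁ ∈ s, ∀ y₂ ∈ s, x₁ ≤ x₂ → x₂ ≤ y₁ → y₁ ≤ y₂ →
      0 ≤ rectVol C x₁ x₂ y₁ y₂)
    (diag : ∀ x ∈ s, ∀ y ∈ s, x < y → 0 ≤ rectVol C x y x y) :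
    TwoIncreasingOn C s := by
  have straddle : ∀ x₁ ∈ s, ∀ x₂ ∈ s, ∀ y₁ ∈ s, ∀ y₂ ∈ s, y₁ ≤ x₁ → x₁ ≤ x₂ → x₂ ≤ y₂ →
      0 ≤ rectVol C x₁ x₂ y₁ y₂ := by
    intro x₁ hx₁ x₂ hx₂ y₁ hy₁ y₂ hy₂ h₁ hx h₂
    have hb := below x₁ hx₁ x₂ hx₂ y₁ hy₁ x₁ hx₁ h₁ le_rfl hx
    have ha := above x₁ hx₁ x₂ hx₂ x₂ hx₂ y₂ hy₂ hx le_rfl h₂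
    have hd : 0 ≤ rectVol C x₁ x₂ x₁ x₂ := by
      rcases hx.eq_or_lt with rfl | hlt
      · simp [rectVol]
      · exact diag x₁ hx₁ x₂ hx₂ hlt
    simp only [rectVol] at *
    linarith
  intro x₁ x₂ y₁ y₂ hx₁ hx₂ hy₁ hy₂ hx hy
  rcases le_total y₂ x₁ with h | h
  · exact below x₁ hx₁ x₂ hx₂ y₁ hy₁ y₂ hy₂ hy h hx
  rcases le_total x₂ y₁ with h' | h'
  · exact above x₁ hx₁ x₂ hx₂ y₁ hy₁ y₂ hy₂ hx h' hy
  -- cut the rectangle along the lines `x = y₁` and `x = y₂` where they cross it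
  rcases le_total y₁ x₁ with h₁ | h₁ <;> rcases le_total x₂ y₂ with h₂ | h₂
  · exact straddle x₁ hx₁ x₂ hx₂ y₁ hy₁ y₂ hy₂ h₁ hx h₂
  · have := straddle x₁ hx₁ y₂ hy₂ y₁ hy₁ y₂ hy₂ h₁ h le_rfl
    have := below y₂ hy₂ x₂ hx₂ y₁ hy₁ y₂ hy₂ hy le_rfl h₂
    simp only [rectVol] at *
    linarith
  · have := above x₁ hx₁ y₁ hy₁ y₁ hy₁ y₂ hy₂ h₁ le_rfl hy
    have := straddle y₁ hy₁ x₂ hx₂ y₁ hy₁ y₂ hy₂ le_rfl h' h₂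
    simp only [rectVol] at *
    linarith
  · have := above x₁ hx₁ y₁ hy₁ y₁ hy₁ y₂ hy₂ h₁ le_rfl hy
    have := straddle y₁ hy₁ y₂ hy₂ y₁ hy₁ y₂ hy₂ le_rfl hy le_rfl
    have := below y₂ hy₂ x₂ hx₂ y₁ hy₁ y₂ hy₂ hy le_rfl h₂
    simp only [rectVol] at *
    linarith

theorem TwoIncreasingOn.of_comp_right {C : α → α → ℝ} {φ : α → α} {s : Set α}
    (hφ : StrictMonoOn φ s) (hsurj : SurjOn φ s s)
    (h : TwoIncreasingOn (fun x a => C x (φ a)) s) : TwoIncreasingOn C s := by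
  intro x₁ x₂ y₁ y₂ hx₁ hx₂ hy₁ hy₂ hx hy
  obtain ⟨a₁, ha₁, rfl⟩ := hsurj hy₁
  obtain ⟨a₂, ha₂, rfl⟩ := hsurj hy₂
  exact h x₁ x₂ a₁ a₂ hx₁ hx₂ ha₁ ha₂ hx ((hφ.le_iff_le ha₁ ha₂).1 hy)

end TwoIncreasing

theorem min_min_add_supermodular {x₁ x₂ y₁ y₂ p₁ p₂ q₁ q₂ : ℝ}
    (hp : p₁ ≤ p₂) (hpx : p₂ - p₁ ≤ x₂ - x₁) (hq : q₁ ≤ q₂) (hqy : q₂ - q₁ ≤ y₂ - y₁) :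
    min x₂ (min y₁ (p₂ + q₁)) + min x₁ (min y₂ (p₁ + q₂)) ≤
      min x₂ (min y₂ (p₂ + q₂)) + min x₁ (min y₁ (p₁ + q₁)) := by
  set A := min x₂ (min y₁ (p₂ + q₁))
  set B := min x₁ (min y₂ (p₁ + q₂))
  have hA : A ≤ x₂ ∧ A ≤ y₁ ∧ A ≤ p₂ + q₁ := by simp [A]
  have hB : B ≤ x₁ ∧ B ≤ y₂ ∧ B ≤ p₁ + q₂ := by simp [B]
  rw [← sub_le_iff_le_add']
  refine le_min ?_ (le_min ?_ ?_) <;> rw [sub_le_comm] <;> refine le_min ?_ (le_min ?_ ?_) <;>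
    linarith

section Splice

theorem sV_self (f : ℝ → ℝ) (a : ℝ) : sV f a a = 0 := variationOnFromTo.self f _ a

theorem sV_add {f : ℝ → ℝ} (hf : LocallyBoundedVariationOn f 𝕀) {a b c : ℝ} (ha : a ∈ 𝕀)
    (hb : b ∈ 𝕀) (hc : c ∈ 𝕀) : sV f a b + sV f b c = sV f a c :=
  variationOnFromTo.add hf ha hb hc

variable {φ Γ ψ : ℝ → ℝ} {a s t x : ℝ}

theorem f1_apply_map (hψ : ψ (φ a) = a) :
    f1 ψ Γ x (φ a) = x - (1/2) * (sV (Ghat Γ) a x + (x - Γ x) + (a - Γ a)) := by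
  rw [f1, hψ]; rfl

theorem f2_apply_map (hψ : ψ (φ a) = a) :
    f2 φ ψ Γ x (φ a) = φ a - (1/2) * (sV (Gtil φ Γ) x a + (φ x - Γ x) + (φ a - Γ a)) := by
  rw [f2, hψ]; rfl

theorem f1_apply_map_self (hψ : ψ (φ x) = x) : f1 ψ Γ x (φ x) = Γ x := by
  rw [f1_apply_map hψ, sV_self]; ring

theorem f2_apply_map_self (hψ : ψ (φ x) = x) : f2 φ ψ Γ x (φ x) = Γ x := by
  rw [f2_apply_map hψ, sV_self]; ring

theorem splice_le_left (x y : ℝ) : splice φ ψ Γ x y ≤ x := by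
  unfold splice C1 C2; split_ifs <;> exact min_le_left _ _

theorem splice_le_right (x y : ℝ) : splice φ ψ Γ x y ≤ y := by
  unfold splice C1 C2; split_ifs <;> exact (min_le_right _ _).trans (min_le_left _ _)

theorem f1_add_f2 (hs : ψ (φ s) = s) (ht : ψ (φ t) = t) :
    f1 ψ Γ t (φ s) + f2 φ ψ Γ s (φ t) = Γ s + Γ t +
      ((t - s) + (φ t - φ s) - (sV (Ghat Γ) s t + sV (Gtil φ Γ) s t)) / 2 := by
  rw [f1_apply_map hs, f2_apply_map ht]
  ring

end Splice

structure IsCurvilinearSection (φ Γ : ℝ → ℝ) : Prop where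
  continuousOn : ContinuousOn φ 𝕀
  strictMonoOn : StrictMonoOn φ 𝕀
  map_zero : φ 0 = 0
  map_one : φ 1 = 1
  bounds : ∀ t ∈ 𝕀, max 0 (t + φ t - 1) ≤ Γ t ∧ Γ t ≤ min t (φ t)
  increment : ∀ t₁ t₂ : ℝ, t₁ ∈ 𝕀 → t₂ ∈ 𝕀 → t₁ ≤ t₂ →
    0 ≤ Γ t₂ - Γ t₁ ∧ Γ t₂ - Γ t₁ ≤ (t₂ - t₁) + (φ t₂ - φ t₁)

namespace IsCurvilinearSection

variable {φ Γ ψ : ℝ → ℝ} {a s t x : ℝ}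

theorem mapsTo (hΓ : IsCurvilinearSection φ Γ) : MapsTo φ 𝕀 𝕀 := fun _ ht =>
  ⟨hΓ.map_zero ▸ hΓ.strictMonoOn.monotoneOn (left_mem_Icc.2 zero_le_one) ht ht.1,
    hΓ.map_one ▸ hΓ.strictMonoOn.monotoneOn ht (right_mem_Icc.2 zero_le_one) ht.2⟩

theorem apply_nonneg (hΓ : IsCurvilinearSection φ Γ) (ht : t ∈ 𝕀) : 0 ≤ Γ t :=
  (le_max_left _ _).trans (hΓ.bounds t ht).1

theorem apply_le_self (hΓ : IsCurvilinearSection φ Γ) (ht : t ∈ 𝕀) : Γ t ≤ t :=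
  (hΓ.bounds t ht).2.trans (min_le_left _ _)

theorem apply_le_map (hΓ : IsCurvilinearSection φ Γ) (ht : t ∈ 𝕀) : Γ t ≤ φ t :=
  (hΓ.bounds t ht).2.trans (min_le_right _ _)

theorem apply_zero (hΓ : IsCurvilinearSection φ Γ) : Γ 0 = 0 :=
  le_antisymm (hΓ.apply_le_self (left_mem_Icc.2 zero_le_one))
    (hΓ.apply_nonneg (left_mem_Icc.2 zero_le_one))

theorem apply_one (hΓ : IsCurvilinearSection φ Γ) : Γ 1 = 1 := by
  have h := (le_max_right _ _).trans (hΓ.bounds 1 (right_mem_Icc.2 zero_le_one)).1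
  rw [hΓ.map_one] at h
  exact le_antisymm (hΓ.apply_le_self (right_mem_Icc.2 zero_le_one)) (by linarith)

theorem monotoneOn (hΓ : IsCurvilinearSection φ Γ) : MonotoneOn Γ 𝕀 := fun _ ha _ hb hab =>
  sub_nonneg.1 (hΓ.increment _ _ ha hb hab).1

theorem monotoneOn_add_sub (hΓ : IsCurvilinearSection φ Γ) :
    MonotoneOn (fun t => t + φ t - Γ t) 𝕀 := fun a ha b hb hab => by
  have := (hΓ.increment a b ha hb hab).2
  dsimp only
  linarith

theorem locallyBoundedVariationOn_Ghat (hΓ : IsCurvilinearSection φ Γ) :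
    LocallyBoundedVariationOn (Ghat Γ) 𝕀 :=
  monotoneOn_id.locallyBoundedVariationOn_sub hΓ.monotoneOn

theorem locallyBoundedVariationOn_Gtil (hΓ : IsCurvilinearSection φ Γ) :
    LocallyBoundedVariationOn (Gtil φ Γ) 𝕀 :=
  hΓ.strictMonoOn.monotoneOn.locallyBoundedVariationOn_sub hΓ.monotoneOn

theorem sV_Ghat_le (hΓ : IsCurvilinearSection φ Γ) (hs : s ∈ 𝕀) (ht : t ∈ 𝕀) (hst : s ≤ t) :
    sV (Ghat Γ) s t ≤ (t - s) + (Γ t - Γ s) :=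
  monotoneOn_id.variationOnFromTo_sub_le hΓ.monotoneOn hs ht hst

theorem sV_Ghat_le' (hΓ : IsCurvilinearSection φ Γ) (hs : s ∈ 𝕀) (ht : t ∈ 𝕀) (hst : s ≤ t) :
    sV (Ghat Γ) s t ≤ (t - s) - (Γ t - Γ s) + 2 * (φ t - φ s) := by
  have h := hΓ.monotoneOn_add_sub.variationOnFromTo_sub_le hΓ.strictMonoOn.monotoneOn hs ht hst
  have e : (fun t => (t + φ t - Γ t) - φ t) = Ghat Γ := by funext t; simp only [Ghat]; ring
  rw [e] at h
  exact h.trans_eq (by ring)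

theorem sV_Gtil_le (hΓ : IsCurvilinearSection φ Γ) (hs : s ∈ 𝕀) (ht : t ∈ 𝕀) (hst : s ≤ t) :
    sV (Gtil φ Γ) s t ≤ (φ t - φ s) + (Γ t - Γ s) :=
  hΓ.strictMonoOn.monotoneOn.variationOnFromTo_sub_le hΓ.monotoneOn hs ht hst

theorem sV_Gtil_le' (hΓ : IsCurvilinearSection φ Γ) (hs : s ∈ 𝕀) (ht : t ∈ 𝕀) (hst : s ≤ t) :
    sV (Gtil φ Γ) s t ≤ (φ t - φ s) - (Γ t - Γ s) + 2 * (t - s) := by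
  have h := hΓ.monotoneOn_add_sub.variationOnFromTo_sub_le monotoneOn_id hs ht hst
  have e : (fun t => (t + φ t - Γ t) - id t) = Gtil φ Γ := by funext t; simp only [Gtil, id]; ring
  rw [e] at h
  exact h.trans_eq (by simp only [id]; ring)

theorem abs_sub_le_sV_Ghat (hΓ : IsCurvilinearSection φ Γ) (hs : s ∈ 𝕀) (ht : t ∈ 𝕀)
    (hst : s ≤ t) : |(t - Γ t) - (s - Γ s)| ≤ sV (Ghat Γ) s t :=
  abs_sub_le_variationOnFromTo hΓ.locallyBoundedVariationOn_Ghat hs ht hst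

theorem abs_sub_le_sV_Gtil (hΓ : IsCurvilinearSection φ Γ) (hs : s ∈ 𝕀) (ht : t ∈ 𝕀)
    (hst : s ≤ t) : |(φ t - Γ t) - (φ s - Γ s)| ≤ sV (Gtil φ Γ) s t :=
  abs_sub_le_variationOnFromTo hΓ.locallyBoundedVariationOn_Gtil hs ht hst

theorem splice_of_le (hΓ : IsCurvilinearSection φ Γ) (ha : a ∈ 𝕀) (hx : x ∈ 𝕀) (hax : a ≤ x) :
    splice φ ψ Γ x (φ a) = min x (min (φ a) (f1 ψ Γ x (φ a))) := by
  rw [splice, if_pos (hΓ.strictMonoOn.monotoneOn ha hx hax), C1]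

theorem splice_of_ge (hΓ : IsCurvilinearSection φ Γ) (hψ : ∀ t ∈ 𝕀, ψ (φ t) = t)
    (hx : x ∈ 𝕀) (ha : a ∈ 𝕀) (hxa : x ≤ a) :
    splice φ ψ Γ x (φ a) = min x (min (φ a) (f2 φ ψ Γ x (φ a))) := by
  rcases hxa.eq_or_lt with rfl | hlt
  · rw [splice, if_pos le_rfl, C1, f1_apply_map_self (hψ x hx), f2_apply_map_self (hψ x hx)]
  · rw [splice, if_neg (hΓ.strictMonoOn hx ha hlt).not_ge, C2]

theorem splice_apply_map_self (hΓ : IsCurvilinearSection φ Γ) (hψ : ∀ t ∈ 𝕀, ψ (φ t) = t)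
    (hx : x ∈ 𝕀) : splice φ ψ Γ x (φ x) = Γ x := by
  rw [hΓ.splice_of_le hx hx le_rfl, f1_apply_map_self (hψ x hx),
    min_eq_right (hΓ.apply_le_map hx), min_eq_right (hΓ.apply_le_self hx)]

theorem apply_le_f1 (hΓ : IsCurvilinearSection φ Γ) (hψ : ∀ t ∈ 𝕀, ψ (φ t) = t)
    (ha : a ∈ 𝕀) (hx : x ∈ 𝕀) (hax : a ≤ x) : Γ a ≤ f1 ψ Γ x (φ a) := by
  rw [f1_apply_map (hψ a ha)]
  linarith [hΓ.sV_Ghat_le ha hx hax]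

theorem map_sub_map_add_le_f1 (hΓ : IsCurvilinearSection φ Γ) (hψ : ∀ t ∈ 𝕀, ψ (φ t) = t)
    (ha : a ∈ 𝕀) (hx : x ∈ 𝕀) (hax : a ≤ x) : φ a - φ x + Γ x ≤ f1 ψ Γ x (φ a) := by
  rw [f1_apply_map (hψ a ha)]
  linarith [hΓ.sV_Ghat_le' ha hx hax]

theorem apply_le_f2 (hΓ : IsCurvilinearSection φ Γ) (hψ : ∀ t ∈ 𝕀, ψ (φ t) = t)
    (hx : x ∈ 𝕀) (ha : a ∈ 𝕀) (hxa : x ≤ a) : Γ x ≤ f2 φ ψ Γ x (φ a) := by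
  rw [f2_apply_map (hψ a ha)]
  linarith [hΓ.sV_Gtil_le hx ha hxa]

theorem sub_add_le_f2 (hΓ : IsCurvilinearSection φ Γ) (hψ : ∀ t ∈ 𝕀, ψ (φ t) = t)
    (hx : x ∈ 𝕀) (ha : a ∈ 𝕀) (hxa : x ≤ a) : x - a + Γ a ≤ f2 φ ψ Γ x (φ a) := by
  rw [f2_apply_map (hψ a ha)]
  linarith [hΓ.sV_Gtil_le' hx ha hxa]

theorem apply_min_le_splice (hΓ : IsCurvilinearSection φ Γ) (hψ : ∀ t ∈ 𝕀, ψ (φ t) = t)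
    (hx : x ∈ 𝕀) (ha : a ∈ 𝕀) : Γ (min x a) ≤ splice φ ψ Γ x (φ a) := by
  rcases le_total a x with hax | hxa
  · rw [min_eq_right hax, hΓ.splice_of_le ha hx hax]
    exact le_min ((hΓ.apply_le_self ha).trans hax)
      (le_min (hΓ.apply_le_map ha) (hΓ.apply_le_f1 hψ ha hx hax))
  · rw [min_eq_left hxa, hΓ.splice_of_ge hψ hx ha hxa]
    exact le_min (hΓ.apply_le_self hx) (le_min ((hΓ.apply_le_map hx).trans
      (hΓ.strictMonoOn.monotoneOn hx ha hxa)) (hΓ.apply_le_f2 hψ hx ha hxa))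

theorem splice_zero_right (hΓ : IsCurvilinearSection φ Γ) (hψ : ∀ t ∈ 𝕀, ψ (φ t) = t)
    (hx : x ∈ 𝕀) : splice φ ψ Γ x 0 = 0 := by
  have h := hΓ.apply_min_le_splice hψ hx (left_mem_Icc.2 zero_le_one)
  rw [min_eq_right hx.1, hΓ.apply_zero, hΓ.map_zero] at h
  exact le_antisymm (splice_le_right x 0) h

theorem splice_zero_left (hΓ : IsCurvilinearSection φ Γ) (hψ : ∀ t ∈ 𝕀, ψ (φ t) = t)
    (ha : a ∈ 𝕀) : splice φ ψ Γ 0 (φ a) = 0 := by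
  have h := hΓ.apply_min_le_splice hψ (left_mem_Icc.2 zero_le_one) ha
  rw [min_eq_left ha.1, hΓ.apply_zero] at h
  exact le_antisymm (splice_le_left 0 _) h

theorem splice_one_right (hΓ : IsCurvilinearSection φ Γ) (hψ : ∀ t ∈ 𝕀, ψ (φ t) = t)
    (hx : x ∈ 𝕀) : splice φ ψ Γ x 1 = x := by
  have h₁ := right_mem_Icc.2 (zero_le_one' ℝ)
  have h := hΓ.sub_add_le_f2 hψ hx h₁ hx.2
  rw [hΓ.apply_one, hΓ.map_one] at h
  refine le_antisymm (splice_le_left x 1) ?_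
  rw [← hΓ.map_one, hΓ.splice_of_ge hψ hx h₁ hx.2, hΓ.map_one]
  exact le_min le_rfl (le_min hx.2 (by linarith))

theorem splice_one_left (hΓ : IsCurvilinearSection φ Γ) (hψ : ∀ t ∈ 𝕀, ψ (φ t) = t)
    (ha : a ∈ 𝕀) : splice φ ψ Γ 1 (φ a) = φ a := by
  have h₁ := right_mem_Icc.2 (zero_le_one' ℝ)
  have h := hΓ.map_sub_map_add_le_f1 hψ ha h₁ ha.2
  rw [hΓ.apply_one, hΓ.map_one] at h
  refine le_antisymm (splice_le_right 1 _) ?_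
  rw [hΓ.splice_of_le ha h₁ ha.2]
  exact le_min (hΓ.mapsTo ha).2 (le_min le_rfl (by linarith))

theorem rectVol_splice_nonneg_of_below (hΓ : IsCurvilinearSection φ Γ)
    (hψ : ∀ t ∈ 𝕀, ψ (φ t) = t) {x₁ x₂ a₁ a₂ : ℝ} (hx₁ : x₁ ∈ 𝕀) (hx₂ : x₂ ∈ 𝕀) (ha₁ : a₁ ∈ 𝕀)
    (ha₂ : a₂ ∈ 𝕀) (ha : a₁ ≤ a₂) (hax : a₂ ≤ x₁) (hx : x₁ ≤ x₂) :
    0 ≤ rectVol (fun x a => splice φ ψ Γ x (φ a)) x₁ x₂ a₁ a₂ := by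
  have hV := hΓ.locallyBoundedVariationOn_Ghat
  let P x := x - (1/2) * (sV (Ghat Γ) a₁ x + (x - Γ x))
  let Q a := (1/2) * (sV (Ghat Γ) a₁ a - (a - Γ a))
  have hsplit : ∀ x ∈ 𝕀, ∀ a ∈ 𝕀, a ≤ x →
      splice φ ψ Γ x (φ a) = min x (min (φ a) (P x + Q a)) := by
    intro x hx a ha hax
    rw [hΓ.splice_of_le ha hx hax, f1_apply_map (hψ a ha)]
    have := sV_add hV ha₁ ha hx
    congr 2
    simp only [P, Q]
    linarith
  have hadd := sV_add hV ha₁ hx₁ hx₂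
  have hself := sV_self (Ghat Γ) a₁
  have hx₁₂ := abs_le.1 (hΓ.abs_sub_le_sV_Ghat hx₁ hx₂ hx)
  have ha₁₂ := abs_le.1 (hΓ.abs_sub_le_sV_Ghat ha₁ ha₂ ha)
  have := min_min_add_supermodular (x₁ := x₁) (x₂ := x₂) (y₁ := φ a₁) (y₂ := φ a₂)
    (p₁ := P x₁) (p₂ := P x₂) (q₁ := Q a₁) (q₂ := Q a₂)
    (by simp only [P]; linarith [hΓ.sV_Ghat_le hx₁ hx₂ hx]) (by simp only [P]; linarith)
    (by simp only [Q]; linarith) (by simp only [Q]; linarith [hΓ.sV_Ghat_le' ha₁ ha₂ ha])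
  rw [rectVol, hsplit x₂ hx₂ a₂ ha₂ (hax.trans hx), hsplit x₂ hx₂ a₁ ha₁ (ha.trans (hax.trans hx)),
    hsplit x₁ hx₁ a₂ ha₂ hax, hsplit x₁ hx₁ a₁ ha₁ (ha.trans hax)]
  linarith

theorem rectVol_splice_nonneg_of_above (hΓ : IsCurvilinearSection φ Γ)
    (hψ : ∀ t ∈ 𝕀, ψ (φ t) = t) {x₁ x₂ a₁ a₂ : ℝ} (hx₁ : x₁ ∈ 𝕀) (hx₂ : x₂ ∈ 𝕀) (ha₁ : a₁ ∈ 𝕀)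
    (ha₂ : a₂ ∈ 𝕀) (hx : x₁ ≤ x₂) (hxa : x₂ ≤ a₁) (ha : a₁ ≤ a₂) :
    0 ≤ rectVol (fun x a => splice φ ψ Γ x (φ a)) x₁ x₂ a₁ a₂ := by
  have hV := hΓ.locallyBoundedVariationOn_Gtil
  let P x := (1/2) * (sV (Gtil φ Γ) x₁ x - (φ x - Γ x))
  let Q a := φ a - (1/2) * (sV (Gtil φ Γ) x₁ a + (φ a - Γ a))
  have hsplit : ∀ x ∈ 𝕀, ∀ a ∈ 𝕀, x ≤ a →
      splice φ ψ Γ x (φ a) = min x (min (φ a) (P x + Q a)) := by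
    intro x hx a ha hxa
    rw [hΓ.splice_of_ge hψ hx ha hxa, f2_apply_map (hψ a ha)]
    have := sV_add hV hx₁ hx ha
    congr 2
    simp only [P, Q]
    linarith
  have hself := sV_self (Gtil φ Γ) x₁
  have hadd := sV_add hV hx₁ ha₁ ha₂
  have hx₁₂ := abs_le.1 (hΓ.abs_sub_le_sV_Gtil hx₁ hx₂ hx)
  have ha₁₂ := abs_le.1 (hΓ.abs_sub_le_sV_Gtil ha₁ ha₂ ha)
  have := min_min_add_supermodular (x₁ := x₁) (x₂ := x₂) (y₁ := φ a₁) (y₂ := φ a₂)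
    (p₁ := P x₁) (p₂ := P x₂) (q₁ := Q a₁) (q₂ := Q a₂)
    (by simp only [P]; linarith) (by simp only [P]; linarith [hΓ.sV_Gtil_le' hx₁ hx₂ hx])
    (by simp only [Q]; linarith [hΓ.sV_Gtil_le ha₁ ha₂ ha]) (by simp only [Q]; linarith)
  rw [rectVol, hsplit x₂ hx₂ a₂ ha₂ (hxa.trans ha), hsplit x₂ hx₂ a₁ ha₁ hxa,
    hsplit x₁ hx₁ a₂ ha₂ (hx.trans (hxa.trans ha)), hsplit x₁ hx₁ a₁ ha₁ (hx.trans hxa)]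
  linarith

theorem splice_add_splice_le (hΓ : IsCurvilinearSection φ Γ) (hψ : ∀ t ∈ 𝕀, ψ (φ t) = t)
    (hs : s ∈ 𝕀) (ht : t ∈ 𝕀) (hst : s ≤ t)
    (h : sV (Ghat Γ) s t ≥ Ghat Γ s + Ghat Γ t ∨ sV (Gtil φ Γ) s t ≥ Gtil φ Γ s + Gtil φ Γ t ∨
      sV (Ghat Γ) s t + sV (Gtil φ Γ) s t ≥ (t - s) + (φ t - φ s)) :
    splice φ ψ Γ t (φ s) + splice φ ψ Γ s (φ t) ≤ Γ s + Γ t := by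
  have hF := f1_apply_map (Γ := Γ) (x := t) (hψ s hs)
  have hG := f2_apply_map (Γ := Γ) (x := s) (hψ t ht)
  rw [hΓ.splice_of_le hs ht hst, hΓ.splice_of_ge hψ hs ht hst]
  have hA := (min_le_right t _).trans (min_le_left (φ s) (f1 ψ Γ t (φ s)))
  have hA' := (min_le_right t _).trans (min_le_right (φ s) (f1 ψ Γ t (φ s)))
  have hB := min_le_left s (min (φ t) (f2 φ ψ Γ s (φ t)))
  have hB' := (min_le_right s _).trans (min_le_right (φ t) (f2 φ ψ Γ s (φ t)))
  simp only [Ghat, Gtil, ge_iff_le] at h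
  rcases h with h | h | h <;> linarith

theorem lt_splice_add_splice (hΓ : IsCurvilinearSection φ Γ) (hψ : ∀ t ∈ 𝕀, ψ (φ t) = t)
    (hs : s ∈ 𝕀) (ht : t ∈ 𝕀) (hst : s ≤ t)
    (hV : sV (Ghat Γ) s t + sV (Gtil φ Γ) s t < (t - s) + (φ t - φ s))
    (hφ : φ t - φ s < Ghat Γ s) (hid : t - s < Gtil φ Γ s) :
    Γ s + Γ t < splice φ ψ Γ t (φ s) + splice φ ψ Γ s (φ t) := by
  have hFG := f1_add_f2 (Γ := Γ) (hψ s hs) (hψ t ht)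
  have hF := hΓ.map_sub_map_add_le_f1 hψ hs ht hst
  have hG := hΓ.sub_add_le_f2 hψ hs ht hst
  have hinc := (hΓ.increment s t hs ht hst).2
  have := hΓ.apply_le_self ht
  have := hΓ.apply_le_map ht
  have := hΓ.strictMonoOn.monotoneOn hs ht hst
  simp only [Ghat, Gtil] at hφ hid
  rw [hΓ.splice_of_le hs ht hst, hΓ.splice_of_ge hψ hs ht hst]
  simp only [← min_add_add_left, ← min_add_add_right, lt_min_iff]
  refine ⟨⟨?_, ?_, ?_⟩, ⟨?_, ?_, ?_⟩, ?_, ?_, ?_⟩ <;> linarith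

theorem splice_add_splice_le_of_isCopula (hΓ : IsCurvilinearSection φ Γ)
    (hψ : ∀ t ∈ 𝕀, ψ (φ t) = t) (hC : IsCopula (splice φ ψ Γ)) {s t : ℝ} (hs : s ∈ 𝕀)
    (ht : t ∈ 𝕀) (hst : s ≤ t) : splice φ ψ Γ t (φ s) + splice φ ψ Γ s (φ t) ≤ Γ s + Γ t := by
  have := hC.2.2 s t (φ s) (φ t) hs ht (hΓ.mapsTo hs) (hΓ.mapsTo ht) hst
    (hΓ.strictMonoOn.monotoneOn hs ht hst)
  rw [hΓ.splice_apply_map_self hψ hs, hΓ.splice_apply_map_self hψ ht] at this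
  linarith

theorem condition_of_splice_add_splice_le (hΓ : IsCurvilinearSection φ Γ)
    (hψ : ∀ t ∈ 𝕀, ψ (φ t) = t)
    (hdiag : ∀ s ∈ 𝕀, ∀ t ∈ 𝕀, s ≤ t →
      splice φ ψ Γ t (φ s) + splice φ ψ Γ s (φ t) ≤ Γ s + Γ t)
    {x₁ x₂ : ℝ} (hx₁ : x₁ ∈ 𝕀) (hx₂ : x₂ ∈ 𝕀) (hlt : x₁ < x₂) :
    sV (Ghat Γ) x₁ x₂ ≥ Ghat Γ x₁ + Ghat Γ x₂ ∨
      sV (Gtil φ Γ) x₁ x₂ ≥ Gtil φ Γ x₁ + Gtil φ Γ x₂ ∨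
      sV (Ghat Γ) x₁ x₂ + sV (Gtil φ Γ) x₁ x₂ ≥ (x₂ - x₁) + (φ x₂ - φ x₁) := by
  by_contra! h
  obtain ⟨hGhat, hGtil, hsum⟩ := h
  have hVhat := hΓ.locallyBoundedVariationOn_Ghat
  have hVtil := hΓ.locallyBoundedVariationOn_Gtil
  obtain ⟨δ, hδ, hφδ⟩ := Metric.uniformContinuousOn_iff.1
    (isCompact_Icc.uniformContinuousOn_of_continuous hΓ.continuousOn)
    ((Ghat Γ x₁ + Ghat Γ x₂ - sV (Ghat Γ) x₁ x₂) / 2) (by linarith)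
  obtain ⟨s, t, hx₁s, hst, htx₂, hts, hg⟩ := exists_short_subinterval_lt
    (g := fun u => u + φ u - (sV (Ghat Γ) x₁ u + sV (Gtil φ Γ) x₁ u)) hlt.le
    (by simp only [sV_self]; linarith)
    (lt_min hδ (by linarith : 0 < (Gtil φ Γ x₁ + Gtil φ Γ x₂ - sV (Gtil φ Γ) x₁ x₂) / 2))
  have hs : s ∈ 𝕀 := ⟨hx₁.1.trans hx₁s, (hst.le.trans htx₂).trans hx₂.2⟩
  have ht : t ∈ 𝕀 := ⟨hx₁.1.trans (hx₁s.trans hst.le), htx₂.trans hx₂.2⟩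
  refine (hdiag s hs t ht hst.le).not_gt (hΓ.lt_splice_add_splice hψ hs ht hst.le ?_ ?_ ?_)
  · linarith [sV_add hVhat hx₁ hs ht, sV_add hVtil hx₁ hs ht]
  · have hGs : Ghat Γ x₁ + Ghat Γ x₂ - sV (Ghat Γ) x₁ x₂ ≤ 2 * Ghat Γ s :=
      add_sub_variationOnFromTo_le hVhat hx₁ hs hx₂ hx₁s (hst.le.trans htx₂)
    have := hφδ s hs t ht (by
      rw [Real.dist_eq, abs_sub_comm, abs_of_pos (sub_pos.2 hst)]
      exact hts.trans_le (min_le_left _ _))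
    rw [Real.dist_eq, abs_sub_comm, abs_of_pos (sub_pos.2 (hΓ.strictMonoOn hs ht hst))] at this
    linarith
  · have hGs : Gtil φ Γ x₁ + Gtil φ Γ x₂ - sV (Gtil φ Γ) x₁ x₂ ≤ 2 * Gtil φ Γ s :=
      add_sub_variationOnFromTo_le hVtil hx₁ hs hx₂ hx₁s (hst.le.trans htx₂)
    linarith [min_le_right δ ((Gtil φ Γ x₁ + Gtil φ Γ x₂ - sV (Gtil φ Γ) x₁ x₂) / 2)]

theorem isCopula_splice (hΓ : IsCurvilinearSection φ Γ) (hψ : ∀ t ∈ 𝕀, ψ (φ t) = t)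
    (hsurj : SurjOn φ 𝕀 𝕀)
    (h : ∀ x₁ ∈ 𝕀, ∀ x₂ ∈ 𝕀, x₁ < x₂ →
      sV (Ghat Γ) x₁ x₂ ≥ Ghat Γ x₁ + Ghat Γ x₂ ∨
      sV (Gtil φ Γ) x₁ x₂ ≥ Gtil φ Γ x₁ + Gtil φ Γ x₂ ∨
      sV (Ghat Γ) x₁ x₂ + sV (Gtil φ Γ) x₁ x₂ ≥ (x₂ - x₁) + (φ x₂ - φ x₁)) :
    IsCopula (splice φ ψ Γ) := by
  refine ⟨fun x hx y hy => ?_, fun x hx => ?_, ?_⟩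
  · obtain ⟨a, ha, rfl⟩ := hsurj hy
    exact ⟨(hΓ.apply_nonneg ⟨le_min hx.1 ha.1, (min_le_left _ _).trans hx.2⟩).trans
      (hΓ.apply_min_le_splice hψ hx ha), (splice_le_left _ _).trans hx.2⟩
  · obtain ⟨a, ha, hax⟩ := hsurj hx
    refine ⟨hΓ.splice_zero_right hψ hx, ?_, hΓ.splice_one_right hψ hx, ?_⟩ <;> rw [← hax]
    exacts [hΓ.splice_zero_left hψ ha, hΓ.splice_one_left hψ ha]
  · refine TwoIncreasingOn.of_comp_right hΓ.strictMonoOn hsurj (.of_diagonal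
      (fun x₁ hx₁ x₂ hx₂ a₁ ha₁ a₂ ha₂ => hΓ.rectVol_splice_nonneg_of_below hψ hx₁ hx₂ ha₁ ha₂)
      (fun x₁ hx₁ x₂ hx₂ a₁ ha₁ a₂ ha₂ => hΓ.rectVol_splice_nonneg_of_above hψ hx₁ hx₂ ha₁ ha₂)
      fun s hs t ht hst => ?_)
    have := hΓ.splice_add_splice_le hψ hs ht hst.le (h s hs t ht hst)
    simp only [rectVol, hΓ.splice_apply_map_self hψ hs, hΓ.splice_apply_map_self hψ ht]
    linarith

end IsCurvilinearSection

theorem stmt_14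
    (φ Γ : ℝ → ℝ)
    (hφcont : ContinuousOn φ (Set.Icc 0 1))
    (hφmono : StrictMonoOn φ (Set.Icc 0 1))
    (hφ0 : φ 0 = 0) (hφ1 : φ 1 = 1)
    (hΓrange : ∀ t ∈ Set.Icc (0:ℝ) 1, max 0 (t + φ t - 1) ≤ Γ t ∧ Γ t ≤ min t (φ t))
    (hΓlip : ∀ t₁ t₂ : ℝ, t₁ ∈ Set.Icc (0:ℝ) 1 → t₂ ∈ Set.Icc (0:ℝ) 1 → t₁ ≤ t₂ →
      0 ≤ Γ t₂ - Γ t₁ ∧ Γ t₂ - Γ t₁ ≤ (t₂ - t₁) + (φ t₂ - φ t₁))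
    (ψ : ℝ → ℝ)
    (hψmem : ∀ y ∈ Set.Icc (0:ℝ) 1, ψ y ∈ Set.Icc (0:ℝ) 1)
    (hψφ : ∀ t ∈ Set.Icc (0:ℝ) 1, ψ (φ t) = t)
    (hφψ : ∀ y ∈ Set.Icc (0:ℝ) 1, φ (ψ y) = y) :
    IsCopula (splice φ ψ Γ) ↔
      ∀ x₁ ∈ Set.Icc (0:ℝ) 1, ∀ x₂ ∈ Set.Icc (0:ℝ) 1, x₁ < x₂ →
        (sV (Ghat Γ) x₁ x₂ ≥ Ghat Γ x₁ + Ghat Γ x₂ ∨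
         sV (Gtil φ Γ) x₁ x₂ ≥ Gtil φ Γ x₁ + Gtil φ Γ x₂ ∨
         sV (Ghat Γ) x₁ x₂ + sV (Gtil φ Γ) x₁ x₂ ≥ (x₂ - x₁) + (φ x₂ - φ x₁)) := by
  have hΓ : IsCurvilinearSection φ Γ := ⟨hφcont, hφmono, hφ0, hφ1, hΓrange, hΓlip⟩
  refine ⟨fun hC x₁ hx₁ x₂ hx₂ hlt => ?_, fun h => ?_⟩
  · exact hΓ.condition_of_splice_add_splice_le hψφ
      (fun s hs t ht hst => hΓ.splice_add_splice_le_of_isCopula hψφ hC hs ht hst) hx₁ hx₂ hlt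
  · exact hΓ.isCopula_splice hψφ (fun y hy => ⟨ψ y, hψmem y hy, hφψ y hy⟩) h
end

section
/- If Γ is φ-simple, then the φ-splice C₂ ▵_φ C₁ equals A_Γ (as functions on [0,1]²). -/
open Set MeasureTheory

/-! φ-simplicity says that `Γ̂` and `Γ̃` are quasiconcave on `[0, 1]`. A bounded quasiconcave
function on `[a, b]` rises towards its supremum `M` and then falls, so its total variation there
is `(M - f a) + (M - f b)`. Substituted into `f₁`, this gives `f₁(x, y) = x - sup Γ̂` over
`[φ⁻¹(y), x]` below the curve `y = φ(x)`, and likewise `f₂(x, y) = y - sup Γ̃` over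
`[x, φ⁻¹(y)]` above it; the remaining term `x` (resp. `y`) of the minimum is redundant since
`Γ̂, Γ̃ ≥ 0`. -/

theorem QuasiconcaveOn.subset {𝕜 E β : Type*} [Semiring 𝕜] [PartialOrder 𝕜] [AddCommMonoid E]
    [LE β] [SMul 𝕜 E] {s t : Set E} {f : E → β} (hf : QuasiconcaveOn 𝕜 s f) (hts : t ⊆ s)
    (ht : Convex 𝕜 t) : QuasiconcaveOn 𝕜 t f := fun r => by
  convert ht.inter (hf r) using 1
  exact Set.ext fun x => ⟨fun h => ⟨h.1, hts h.1, h.2⟩, fun h => ⟨h.1, h.2.2⟩⟩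

section Variation

variable {f : ℝ → ℝ} {a b : ℝ}

theorem quasiconcaveOn_of_min_le {s : Set ℝ} (hs : Convex ℝ s)
    (hf : ∀ x ∈ s, ∀ y ∈ s, ∀ lam ∈ Icc (0:ℝ) 1,
      min (f x) (f y) ≤ f (lam * x + (1 - lam) * y)) :
    QuasiconcaveOn ℝ s f := by
  refine quasiconcaveOn_iff_min_le.2 ⟨hs, fun x hx y hy a b ha hb hab => ?_⟩
  obtain rfl : b = 1 - a := by linarith
  exact hf x hx y hy a ⟨ha, by linarith⟩

theorem QuasiconcaveOn.min_le_of_mem_Icc {s : Set ℝ} (hf : QuasiconcaveOn ℝ s f)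
    {p q r : ℝ} (hp : p ∈ s) (hq : q ∈ s) (hr : r ∈ Icc p q) :
    min (f p) (f q) ≤ f r :=
  ((hf _).ordConnected.out ⟨hp, min_le_left _ _⟩ ⟨hq, min_le_right _ _⟩ hr).2

theorem sum_range_abs_sub_of_unimodal (v : ℕ → ℝ) {m n : ℕ} (hmn : m ≤ n)
    (hup : MonotoneOn v (Iic m)) (hdown : AntitoneOn v (Icc m n)) :
    ∑ i ∈ Finset.range n, |v (i + 1) - v i| = (v m - v 0) + (v m - v n) := by
  have hrise : ∑ i ∈ Finset.range m, |v (i + 1) - v i| = v m - v 0 := by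
    rw [← Finset.sum_range_sub]
    refine Finset.sum_congr rfl fun i hi => abs_of_nonneg (sub_nonneg.2 ?_)
    have hi : i + 1 ≤ m := Finset.mem_range.1 hi
    exact hup (mem_Iic.2 (by omega)) (mem_Iic.2 hi) (by omega)
  have hfall : ∑ i ∈ Finset.Ico m n, |v (i + 1) - v i| = v m - v n := by
    rw [← neg_sub, ← Finset.sum_Ico_sub v hmn, ← Finset.sum_neg_distrib]
    refine Finset.sum_congr rfl fun i hi => abs_of_nonpos (sub_nonpos.2 ?_)
    have hi := Finset.mem_Ico.1 hi
    exact hdown ⟨hi.1, hi.2.le⟩ ⟨by omega, hi.2⟩ (by omega)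
  rw [← Finset.sum_range_add_sum_Ico _ hmn, hrise, hfall]

theorem QuasiconcaveOn.eVariationOn_Icc_le {M : ℝ} (hab : a ≤ b)
    (hf : QuasiconcaveOn ℝ (Icc a b) f) (hM : ∀ t ∈ Icc a b, f t ≤ M) :
    eVariationOn f (Icc a b) ≤ ENNReal.ofReal (2 * M - f a - f b) := by
  have ha : a ∈ Icc a b := left_mem_Icc.2 hab
  have hb : b ∈ Icc a b := right_mem_Icc.2 hab
  refine iSup_le fun ⟨n, u, hu, us⟩ => ?_
  obtain ⟨m, hm, hmax⟩ := Finset.exists_max_image (Finset.range (n + 1)) (f ∘ u) ⟨0, by simp⟩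
  have hmn : m ≤ n := Nat.lt_succ_iff.1 (Finset.mem_range.1 hm)
  replace hmax : ∀ i ≤ n, f (u i) ≤ f (u m) := fun i hi =>
    hmax i (Finset.mem_range.2 (Nat.lt_succ_of_le hi))
  have hup : MonotoneOn (f ∘ u) (Iic m) := fun i hi j hj hij => by
    have := hf.min_le_of_mem_Icc (us i) (us m) ⟨hu hij, hu (mem_Iic.1 hj)⟩
    rcases min_le_iff.1 this with h | h
    · exact h
    · exact (hmax i ((mem_Iic.1 hi).trans hmn)).trans h
  have hdown : AntitoneOn (f ∘ u) (Icc m n) := fun i hi j hj hij => by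
    have := hf.min_le_of_mem_Icc (us m) (us j) ⟨hu hi.1, hu hij⟩
    rcases min_le_iff.1 this with h | h
    · exact (hmax j hj.2).trans h
    · exact h
  have hsum := sum_range_abs_sub_of_unimodal (f ∘ u) hmn hup hdown
  simp only [Function.comp_apply] at hsum
  have hfa : f (u m) - f (u 0) ≤ M - f a := by
    have := hf.min_le_of_mem_Icc ha (us m) ⟨(us 0).1, hu (Nat.zero_le m)⟩
    rcases min_le_iff.1 this with h | h <;> linarith [hM _ (us m), hM a ha]
  have hfb : f (u m) - f (u n) ≤ M - f b := by
    have := hf.min_le_of_mem_Icc (us m) hb ⟨hu hmn, (us n).2⟩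
    rcases min_le_iff.1 this with h | h <;> linarith [hM _ (us m), hM b hb]
  calc ∑ i ∈ Finset.range n, edist (f (u (i + 1))) (f (u i))
      = ENNReal.ofReal (∑ i ∈ Finset.range n, |f (u (i + 1)) - f (u i)|) := by
        rw [ENNReal.ofReal_sum_of_nonneg fun i _ => abs_nonneg _]
        simp only [edist_dist, Real.dist_eq]
    _ ≤ ENNReal.ofReal (2 * M - f a - f b) := ENNReal.ofReal_le_ofReal (by linarith)

theorem ofReal_two_mul_sub_le_eVariationOn_Icc {t : ℝ} (ht : t ∈ Icc a b) :
    ENNReal.ofReal (2 * f t - f a - f b) ≤ eVariationOn f (Icc a b) := by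
  have hsplit := eVariationOn.Icc_add_Icc f (s := univ) ht.1 ht.2 (mem_univ t)
  simp only [univ_inter] at hsplit
  calc ENNReal.ofReal (2 * f t - f a - f b)
      = ENNReal.ofReal ((f t - f a) + (f t - f b)) := by ring_nf
    _ ≤ ENNReal.ofReal (f t - f a) + ENNReal.ofReal (f t - f b) := ENNReal.ofReal_add_le
    _ ≤ edist (f a) (f t) + edist (f t) (f b) := by
        simp only [edist_dist, Real.dist_eq]
        gcongr
        · exact abs_sub_comm (f a) (f t) ▸ le_abs_self _
        · exact le_abs_self _
    _ ≤ eVariationOn f (Icc a t) + eVariationOn f (Icc t b) :=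
        add_le_add (eVariationOn.edist_le f (left_mem_Icc.2 ht.1) (right_mem_Icc.2 ht.1))
          (eVariationOn.edist_le f (left_mem_Icc.2 ht.2) (right_mem_Icc.2 ht.2))
    _ = eVariationOn f (Icc a b) := hsplit

theorem QuasiconcaveOn.eVariationOn_Icc_eq (hab : a ≤ b)
    (hf : QuasiconcaveOn ℝ (Icc a b) f) (hbdd : BddAbove (f '' Icc a b)) :
    eVariationOn f (Icc a b) = ENNReal.ofReal (2 * sSup (f '' Icc a b) - f a - f b) := by
  have hM : ∀ t ∈ Icc a b, f t ≤ sSup (f '' Icc a b) := fun t ht =>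
    le_csSup hbdd (mem_image_of_mem f ht)
  have hle := hf.eVariationOn_Icc_le hab hM
  have hfin : eVariationOn f (Icc a b) ≠ ⊤ := ne_top_of_le_ne_top ENNReal.ofReal_ne_top hle
  refine hle.antisymm ?_
  rw [← ENNReal.ofReal_toReal hfin]
  refine ENNReal.ofReal_le_ofReal ?_
  have hsup : sSup (f '' Icc a b) ≤ ((eVariationOn f (Icc a b)).toReal + f a + f b) / 2 := by
    refine csSup_le ((nonempty_Icc.2 hab).image f) ?_
    rintro _ ⟨t, ht, rfl⟩
    have := (ENNReal.ofReal_le_iff_le_toReal hfin).1 (ofReal_two_mul_sub_le_eVariationOn_Icc ht)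
    linarith
  linarith

theorem sV_eq_of_quasiconcaveOn (ha : 0 ≤ a) (hab : a ≤ b) (hb : b ≤ 1)
    (hf : QuasiconcaveOn ℝ (Icc a b) f) (hbdd : BddAbove (f '' Icc a b)) :
    sV f a b = 2 * sSup (f '' Icc a b) - f a - f b := by
  have hM : ∀ t ∈ Icc a b, f t ≤ sSup (f '' Icc a b) := fun t ht =>
    le_csSup hbdd (mem_image_of_mem f ht)
  rw [sV, variationOnFromTo.eq_of_le f _ hab, inter_eq_self_of_subset_right
    (Icc_subset_Icc ha hb), hf.eVariationOn_Icc_eq hab hbdd, ENNReal.toReal_ofReal]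
  linarith [hM a (left_mem_Icc.2 hab), hM b (right_mem_Icc.2 hab)]

end Variation

section CurvilinearSection

variable {φ ψ Γ : ℝ → ℝ} {t x y : ℝ}

theorem Ghat_mem_Icc (ht : t ∈ Icc 0 1)
    (hΓ : max 0 (t + φ t - 1) ≤ Γ t ∧ Γ t ≤ min t (φ t)) : Ghat Γ t ∈ Icc 0 1 := by
  have := le_max_left 0 (t + φ t - 1)
  have := min_le_left t (φ t)
  simp only [Ghat, mem_Icc]
  constructor <;> linarith [ht.2]

theorem Gtil_mem_Icc (ht : t ∈ Icc 0 1)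
    (hΓ : max 0 (t + φ t - 1) ≤ Γ t ∧ Γ t ≤ min t (φ t)) : Gtil φ Γ t ∈ Icc 0 1 := by
  have := le_max_right 0 (t + φ t - 1)
  have := min_le_right t (φ t)
  simp only [Gtil, mem_Icc]
  constructor <;> linarith [ht.1]

theorem splice_eq_AG_of_le (hx : x ∈ Icc 0 1) (hψy : ψ y ∈ Icc 0 1) (hψyx : ψ y ≤ x)
    (hxy : y ≤ φ x) (hq : QuasiconcaveOn ℝ (Icc 0 1) (Ghat Γ))
    (hmem : ∀ t ∈ Icc (0:ℝ) 1, Ghat Γ t ∈ Icc 0 1) :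
    splice φ ψ Γ x y = AG φ ψ Γ x y := by
  have hsub : Icc (ψ y) x ⊆ Icc 0 1 := Icc_subset_Icc hψy.1 hx.2
  have hbdd : BddAbove (Ghat Γ '' Icc (ψ y) x) :=
    ⟨1, forall_mem_image.2 fun t ht => (hmem t (hsub ht)).2⟩
  have hV := sV_eq_of_quasiconcaveOn hψy.1 hψyx hx.2 (hq.subset hsub (convex_Icc _ _)) hbdd
  have hM : 0 ≤ sSup (Ghat Γ '' Icc (ψ y) x) :=
    (hmem x hx).1.trans (le_csSup hbdd (mem_image_of_mem _ (right_mem_Icc.2 hψyx)))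
  have hf1 : f1 ψ Γ x y = x - sSup (Ghat Γ '' Icc (ψ y) x) := by
    rw [f1, hV]
    ring
  rw [splice, AG, if_pos hxy, if_pos hxy, C1, hf1, min_left_comm,
    min_eq_right (show x - _ ≤ x by linarith)]

theorem splice_eq_AG_of_lt (hx : x ∈ Icc 0 1) (hψy : ψ y ∈ Icc 0 1) (hxψy : x ≤ ψ y)
    (hxy : φ x < y) (hq : QuasiconcaveOn ℝ (Icc 0 1) (Gtil φ Γ))
    (hmem : ∀ t ∈ Icc (0:ℝ) 1, Gtil φ Γ t ∈ Icc 0 1) :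
    splice φ ψ Γ x y = AG φ ψ Γ x y := by
  have hsub : Icc x (ψ y) ⊆ Icc 0 1 := Icc_subset_Icc hx.1 hψy.2
  have hbdd : BddAbove (Gtil φ Γ '' Icc x (ψ y)) :=
    ⟨1, forall_mem_image.2 fun t ht => (hmem t (hsub ht)).2⟩
  have hV := sV_eq_of_quasiconcaveOn hx.1 hxψy hψy.2 (hq.subset hsub (convex_Icc _ _)) hbdd
  have hM : 0 ≤ sSup (Gtil φ Γ '' Icc x (ψ y)) :=
    (hmem x hx).1.trans (le_csSup hbdd (mem_image_of_mem _ (left_mem_Icc.2 hxψy)))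
  have hf2 : f2 φ ψ Γ x y = y - sSup (Gtil φ Γ '' Icc x (ψ y)) := by
    rw [f2, hV]
    ring
  rw [splice, AG, if_neg hxy.not_ge, if_neg hxy.not_ge, C2, hf2,
    min_eq_right (show y - _ ≤ y by linarith)]

end CurvilinearSection

theorem stmt_18_general
    (φ Γ : ℝ → ℝ)
    (hφmono : StrictMonoOn φ (Set.Icc 0 1))
    (hΓrange : ∀ t ∈ Set.Icc (0:ℝ) 1, max 0 (t + φ t - 1) ≤ Γ t ∧ Γ t ≤ min t (φ t))
    (ψ : ℝ → ℝ)
    (hψmem : ∀ y ∈ Set.Icc (0:ℝ) 1, ψ y ∈ Set.Icc (0:ℝ) 1)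
    (hφψ : ∀ y ∈ Set.Icc (0:ℝ) 1, φ (ψ y) = y)
    (hsimple : ∀ x ∈ Set.Icc (0:ℝ) 1, ∀ y ∈ Set.Icc (0:ℝ) 1, ∀ lam ∈ Set.Icc (0:ℝ) 1,
      min (Ghat Γ x) (Ghat Γ y) ≤ Ghat Γ (lam * x + (1 - lam) * y) ∧
      min (Gtil φ Γ x) (Gtil φ Γ y) ≤ Gtil φ Γ (lam * x + (1 - lam) * y)) :
    ∀ x ∈ Set.Icc (0:ℝ) 1, ∀ y ∈ Set.Icc (0:ℝ) 1, splice φ ψ Γ x y = AG φ ψ Γ x y := by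
  intro x hx y hy
  have hψy := hψmem y hy
  by_cases hxy : y ≤ φ x
  · have hψyx : ψ y ≤ x := not_lt.1 fun h =>
      lt_irrefl y (hxy.trans_lt (hφψ y hy ▸ hφmono hx hψy h))
    exact splice_eq_AG_of_le hx hψy hψyx hxy
      (quasiconcaveOn_of_min_le (convex_Icc 0 1) fun s hs t ht lam hlam =>
        (hsimple s hs t ht lam hlam).1)
      fun t ht => Ghat_mem_Icc ht (hΓrange t ht)
  · have hxψy : x ≤ ψ y := not_lt.1 fun h =>
      hxy (hφψ y hy ▸ hφmono hψy hx h).le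
    exact splice_eq_AG_of_lt hx hψy hxψy (not_le.1 hxy)
      (quasiconcaveOn_of_min_le (convex_Icc 0 1) fun s hs t ht lam hlam =>
        (hsimple s hs t ht lam hlam).2)
      fun t ht => Gtil_mem_Icc ht (hΓrange t ht)

theorem stmt_18
    (φ Γ : ℝ → ℝ)
    (hφcont : ContinuousOn φ (Set.Icc 0 1))
    (hφmono : StrictMonoOn φ (Set.Icc 0 1))
    (hφ0 : φ 0 = 0) (hφ1 : φ 1 = 1)
    (hΓrange : ∀ t ∈ Set.Icc (0:ℝ) 1, max 0 (t + φ t - 1) ≤ Γ t ∧ Γ t ≤ min t (φ t))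
    (hΓlip : ∀ t₁ t₂ : ℝ, t₁ ∈ Set.Icc (0:ℝ) 1 → t₂ ∈ Set.Icc (0:ℝ) 1 → t₁ ≤ t₂ →
      0 ≤ Γ t₂ - Γ t₁ ∧ Γ t₂ - Γ t₁ ≤ (t₂ - t₁) + (φ t₂ - φ t₁))
    (ψ : ℝ → ℝ)
    (hψmem : ∀ y ∈ Set.Icc (0:ℝ) 1, ψ y ∈ Set.Icc (0:ℝ) 1)
    (hψφ : ∀ t ∈ Set.Icc (0:ℝ) 1, ψ (φ t) = t)
    (hφψ : ∀ y ∈ Set.Icc (0:ℝ) 1, φ (ψ y) = y)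
    (hsimple : ∀ x ∈ Set.Icc (0:ℝ) 1, ∀ y ∈ Set.Icc (0:ℝ) 1, ∀ lam ∈ Set.Icc (0:ℝ) 1,
      min (Ghat Γ x) (Ghat Γ y) ≤ Ghat Γ (lam * x + (1 - lam) * y) ∧
      min (Gtil φ Γ x) (Gtil φ Γ y) ≤ Gtil φ Γ (lam * x + (1 - lam) * y)) :
    ∀ x ∈ Set.Icc (0:ℝ) 1, ∀ y ∈ Set.Icc (0:ℝ) 1, splice φ ψ Γ x y = AG φ ψ Γ x y :=
  stmt_18_general φ Γ hφmono hΓrange ψ hψmem hφψ hsimple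
end

section
/- For any real-valued function f on an interval [a, b] with a < b, the total variation V_a^b(f) equals the supremum, over all partitions a = x₀ ≤ x₁ ≤ … ≤ x_{2m} = b with an even number 2m of subintervals (m ≥ 1), of the quantity 2·Σ_{k=1}^{m} f(x_{2k−1}) − 2·Σ_{k=1}^{m−1} f(x_{2k}) − f(a) − f(b). -/
open Set

private lemma lemA_stmt19 (g : ℕ → ℝ) : ∀ m : ℕ, 1 ≤ m →
    2 * (∑ k ∈ Finset.range m, g (2*k+1)) - 2 * (∑ k ∈ Finset.range (m-1), g (2*(k+1)))
      - g 0 - g (2*m)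
      = ∑ j ∈ Finset.range (2*m), (-1:ℝ)^j * (g (j+1) - g j) := by
  intro m
  induction m with
  | zero => intro h; exact absurd h (by omega)
  | succ n ih =>
    intro _
    rcases Nat.eq_zero_or_pos n with rfl | hn
    · norm_num [Finset.sum_range_succ]
      ring
    · have h2 : 2 * (n + 1) = (2 * n + 1) + 1 := by ring
      rw [h2, Finset.sum_range_succ, Finset.sum_range_succ, Finset.sum_range_succ,
        show n + 1 - 1 = (n - 1) + 1 by omega, Finset.sum_range_succ, ← ih hn]
      have e1 : 2 * (n - 1 + 1) = 2 * n := by omega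
      have e2 : (2 * n + 1) + 1 = 2 * (n + 1) := by ring
      rw [e1, e2]
      have : (-1:ℝ)^(2*n) = 1 := by
        rw [pow_mul]; norm_num
      rw [pow_succ, this]
      ring

private lemma lemB_stmt19 (u : ℕ → ℝ) (n : ℕ) (hn : 1 ≤ n) :
    ∑ k ∈ Finset.range n, |u (k+1) - u k|
      = 2 * (∑ k ∈ Finset.range n, max (u k) (u (k+1)))
        - 2 * (∑ k ∈ Finset.range (n-1), u (k+1)) - u 0 - u n := by
  have key : ∀ k, |u (k+1) - u k| = 2 * max (u k) (u (k+1)) - u k - u (k+1) := by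
    intro k
    rcases le_total (u k) (u (k+1)) with h | h
    · rw [max_eq_right h, abs_of_nonneg (by linarith)]; ring
    · rw [max_eq_left h, abs_of_nonpos (by linarith)]; ring
  simp only [key]
  have s1 : ∑ k ∈ Finset.range n, u k = u 0 + ∑ k ∈ Finset.range (n-1), u (k+1) := by
    conv_lhs => rw [show n = (n-1)+1 by omega, Finset.sum_range_succ']
    ring
  have s2 : ∑ k ∈ Finset.range n, u (k+1) = (∑ k ∈ Finset.range (n-1), u (k+1)) + u n := by
    conv_lhs => rw [show n = (n-1)+1 by omega, Finset.sum_range_succ, show (n-1)+1 = n by omega]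
  rw [Finset.sum_sub_distrib, Finset.sum_sub_distrib, Finset.mul_sum, s1, s2,
    ← Finset.mul_sum]
  ring

theorem stmt_19 (a b : ℝ) (hab : a < b) (f : ℝ → ℝ) :
    (⨆ p : {p : ℕ × (ℕ → ℝ) //
        Monotone p.2 ∧ (∀ i, p.2 i ∈ Set.Icc a b) ∧ p.2 0 = a ∧ p.2 p.1 = b},
      ENNReal.ofReal (∑ i ∈ Finset.range p.1.1, |f (p.1.2 (i + 1)) - f (p.1.2 i)|)) =
    (⨆ p : {p : ℕ × (ℕ → ℝ) //
        1 ≤ p.1 ∧ Monotone p.2 ∧ (∀ i, p.2 i ∈ Set.Icc a b) ∧ p.2 0 = a ∧ p.2 (2 * p.1) = b},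
      ENNReal.ofReal (2 * (∑ k ∈ Finset.range p.1.1, f (p.1.2 (2 * k + 1)))
        - 2 * (∑ k ∈ Finset.range (p.1.1 - 1), f (p.1.2 (2 * (k + 1)))) - f a - f b)) := by
  apply le_antisymm
  · -- LHS ≤ RHS
    apply iSup_le
    rintro ⟨⟨n, x⟩, hmono, hmem, h0, hn⟩
    replace hmono : Monotone x := hmono
    replace hmem : ∀ i, x i ∈ Set.Icc a b := hmem
    replace h0 : x 0 = a := h0
    replace hn : x n = b := hn
    rcases Nat.eq_zero_or_pos n with rfl | hn1
    · simp
    · set y : ℕ → ℝ := fun j => if Even j then x (j/2)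
        else if f (x (j/2 + 1)) ≤ f (x (j/2)) then x (j/2) else x (j/2 + 1) with hy
    -- basic facts about y
      have yeven : ∀ k, y (2*k) = x k := by
        intro k
        simp only [hy]
        rw [if_pos ⟨k, by ring⟩, Nat.mul_div_cancel_left k (by norm_num)]
      have yodd_f : ∀ k, f (y (2*k+1)) = max (f (x k)) (f (x (k+1))) := by
        intro k
        have hne : ¬ Even (2*k+1) := by
          simp [Nat.even_add_one, Nat.even_mul]
        have hdiv : (2*k+1)/2 = k := by omega
        simp only [hy, hne, if_false, hdiv]
        split_ifs with h
        · rw [max_eq_left h]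
        · rw [max_eq_right (le_of_not_ge h)]
      have yodd_mem : ∀ k, x k ≤ y (2*k+1) ∧ y (2*k+1) ≤ x (k+1) := by
        intro k
        have hne : ¬ Even (2*k+1) := by
          simp [Nat.even_add_one, Nat.even_mul]
        have hdiv : (2*k+1)/2 = k := by omega
        simp only [hy, hne, if_false, hdiv]
        split_ifs with h
        · exact ⟨le_refl _, hmono (Nat.le_succ k)⟩
        · exact ⟨hmono (Nat.le_succ k), le_refl _⟩
      have ymono : Monotone y := by
        apply monotone_nat_of_le_succ
        intro j
        rcases Nat.even_or_odd j with ⟨k, hk⟩ | ⟨k, hk⟩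
        · have hj : j = 2*k := by omega
          rw [hj, yeven]
          exact (yodd_mem k).1
        · have hj : j = 2*k+1 := by omega
          have : j + 1 = 2*(k+1) := by omega
          rw [hj, show 2*k+1+1 = 2*(k+1) from by ring, yeven]
          exact (yodd_mem k).2
      have ymem : ∀ i, y i ∈ Set.Icc a b := by
        intro i
        simp only [hy]
        split_ifs <;> apply hmem
      have y0 : y 0 = a := by
        have := yeven 0
        simpa [h0] using this
      have yn : y (2*n) = b := by rw [yeven]; exact hn
      refine le_iSup_of_le ⟨⟨n, y⟩, hn1, ymono, ymem, y0, yn⟩ (le_of_eq ?_)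
      congr 1
      have sum1 : ∑ k ∈ Finset.range n, f (y (2*k+1))
          = ∑ k ∈ Finset.range n, max (f (x k)) (f (x (k+1))) :=
        Finset.sum_congr rfl fun k _ => yodd_f k
      have sum2 : ∑ k ∈ Finset.range (n-1), f (y (2*(k+1)))
          = ∑ k ∈ Finset.range (n-1), f (x (k+1)) :=
        Finset.sum_congr rfl fun k _ => by rw [yeven]
      rw [lemB_stmt19 (fun k => f (x k)) n hn1]
      rw [sum1, sum2, h0, hn]
  · -- RHS ≤ LHS
    apply iSup_le
    rintro ⟨⟨m, y⟩, hm, hmono, hmem, h0, hn⟩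
    replace h0 : y 0 = a := h0
    replace hn : y (2*m) = b := hn
    replace hm : 1 ≤ m := hm
    refine le_iSup_of_le ⟨⟨2*m, y⟩, hmono, hmem, h0, hn⟩ ?_
    apply ENNReal.ofReal_le_ofReal
    have := lemA_stmt19 (fun k => f (y k)) m hm
    rw [show f a = f (y 0) by rw [h0], show f b = f (y (2*m)) by rw [hn], this]
    apply Finset.sum_le_sum
    intro j _
    calc (-1:ℝ)^j * (f (y (j+1)) - f (y j))
        ≤ |(-1:ℝ)^j * (f (y (j+1)) - f (y j))| := le_abs_self _
      _ = |f (y (j+1)) - f (y j)| := by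
          rw [abs_mul, abs_pow, abs_neg, abs_one, one_pow, one_mul]
end
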